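/- Let σ ∈ S_n, let r ≥ 0, let S = (s^1,…,s^n) ∈ (ℕ^r)^n, and let τ = σ_∅(S) be the reading permutation of S with respect to the empty set R = ∅. Then Des_{∅,S}(σ) = des(τ^{−1}σ), where des(π) = { i ∈ {1,…,n−1} : π_i > π_{i+1} } is the ordinary descent set. -/

import Mathlib

open scoped Classical

namespace RomeroComaj

noncomputable section

/-- `Seq r` is `ℕ^r`, the type of sequences of natural numbers of length `r`. -/
abbrev Seq (r : ℕ) := Fin r → ℕ

/-- strict lexicographic order on `ℕ^r`. -/
def lexLt {r : ℕ} (a b : Seq r) : Prop :=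
  ∃ i : Fin r, (∀ j : Fin r, j < i → a j = b j) ∧ a i < b i

/-- weak lexicographic order on `ℕ^r`. -/
def lexLe {r : ℕ} (a b : Seq r) : Prop :=
  lexLt a b ∨ a = b

/-- `RNbr R a b` : the (1-indexed) indices `a` and `b` are `R`-neighbors,
i.e. (for `a < b`) all of `a, a+1, …, b-1` lie in `R`. -/
def RNbr (R : Finset ℕ) (a b : ℕ) : Prop :=
  ∀ t ∈ Finset.Ico (min a b) (max a b), t ∈ R

/-- the value `σ_i` of the one-line notation of `σ`, both position `i` and
the value being 1-indexed (junk value `0` outside `1 ≤ i ≤ n`). -/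
def pget {n : ℕ} (σ : Equiv.Perm (Fin n)) (i : ℕ) : ℕ :=
  if h : i - 1 < n then (σ ⟨i - 1, h⟩).val + 1 else 0

/-- the sequence `s^i` of a list `S = (s^1, …, s^n)`, `i` being 1-indexed. -/
def sget {n r : ℕ} (S : Fin n → Seq r) (i : ℕ) : Seq r :=
  if h : i - 1 < n then S ⟨i - 1, h⟩ else 0

/-- the condition for `i` to belong to `Des_{R,S}(σ)`:
`s^{σ_i} > s^{σ_{i+1}} − χ(σ_{i+1} < σ_i ∧ σ_{i+1} ≁_R σ_i) − χ(σ_{i+1} > σ_i ∧ σ_i ∼_R σ_{i+1})`. -/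
def desCond {n r : ℕ} (R : Finset ℕ) (S : Fin n → Seq r) (σ : Equiv.Perm (Fin n)) (i : ℕ) :
    Prop :=
  if (pget σ (i+1) < pget σ i ∧ ¬ RNbr R (pget σ (i+1)) (pget σ i)) ∨
      (pget σ i < pget σ (i+1) ∧ RNbr R (pget σ i) (pget σ (i+1)))
  then lexLe (sget S (pget σ (i+1))) (sget S (pget σ i))
  else lexLt (sget S (pget σ (i+1))) (sget S (pget σ i))

/-- `Des_{R,S}(σ) ⊆ {1, …, n−1}` (1-indexed positions). -/
def DesSet {n r : ℕ} (R : Finset ℕ) (S : Fin n → Seq r) (σ : Equiv.Perm (Fin n)) : Finset ℕ :=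
  (Finset.Icc 1 (n-1)).filter (fun i => desCond R S σ i)

/-- `Comaj_{R,S}(σ) = ∑_{i ∈ Des_{R,S}(σ)} (n − i)`. -/
def Comaj {n r : ℕ} (R : Finset ℕ) (S : Fin n → Seq r) (σ : Equiv.Perm (Fin n)) : ℕ :=
  ∑ i ∈ DesSet R S σ, (n - i)

/-- `s^i` is read before `s^j` in the reading order of `S` (with respect to `R`);
`i, j` are 1-indexed. -/
def readBefore {n r : ℕ} (R : Finset ℕ) (S : Fin n → Seq r) (i j : ℕ) : Prop :=
  lexLt (sget S i) (sget S j) ∨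
    (sget S i = sget S j ∧ ((i < j ∧ ¬ RNbr R i j) ∨ (j < i ∧ RNbr R j i)))

/-- `IsReading R S σ` says that the reading permutation `σ_R(S)` equals `σ`,
i.e. `σ` lists `1, …, n` in the reading order of `S`. -/
def IsReading {n r : ℕ} (R : Finset ℕ) (S : Fin n → Seq r) (σ : Equiv.Perm (Fin n)) : Prop :=
  ∀ i ∈ Finset.Icc 1 (n-1), readBefore R S (pget σ i) (pget σ (i+1))

/-- the operator `Z_{R,σ} : (ℕ^r)^n → (ℕ^{r+1})^n`, prepending to `s^v` the number of
descents of `σ` (w.r.t. `R, S`) at positions strictly before the position of `v` in `σ`. -/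
def Zop {n r : ℕ} (R : Finset ℕ) (σ : Equiv.Perm (Fin n)) (S : Fin n → Seq r) :
    Fin n → Seq (r+1) :=
  fun v => Fin.cons ((DesSet R S σ ∩ Finset.Ico 1 ((σ.symm v).val + 1)).card) (S v)

/-- `Zvec R σs i = Z_{R,σ^i} ⋯ Z_{R,σ^1}(∅)` where `σ^{j+1} = σs j`. -/
def Zvec {n : ℕ} (R : Finset ℕ) (σs : ℕ → Equiv.Perm (Fin n)) : (i : ℕ) → Fin n → Seq i
  | 0 => fun _ => (0 : Seq 0)
  | (i+1) => Zop R (σs i) (Zvec R σs i)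

/-- extend a finite vector of permutations to `ℕ`, by the identity. -/
def extFun {n r : ℕ} (σv : Fin r → Equiv.Perm (Fin n)) : ℕ → Equiv.Perm (Fin n) :=
  fun j => if h : j < r then σv ⟨j, h⟩ else 1

/-- `comajI R k σv i = comaj^i_R(σ⃗)` for `1 ≤ i ≤ k`, where `σ⃗ = σv` has length `k−1`
and `σ^k = ε`. -/
def comajI {n : ℕ} (R : Finset ℕ) (k : ℕ) (σv : Fin (k-1) → Equiv.Perm (Fin n)) (i : ℕ) : ℕ :=
  Comaj R (Zvec R (extFun σv) (i-1)) (extFun σv (i-1))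

/-- the exponent of the monomial `q^S` for `S ∈ (ℕ^r)^n` : the (0-indexed) variable `i`
(that is, `q_{i+1}`) records the `(r−i)`-th (0-indexed: `r−1−i`-th) coordinates. -/
def expOf {n r : ℕ} (S : Fin n → Seq r) : Fin r →₀ ℕ :=
  Finsupp.equivFunOnFinite.symm (fun i => ∑ j : Fin n, S j (Fin.rev i))

/-- the formal power series whose coefficient at a monomial `d` counts the elements
`a : α` satisfying `P a d`. -/
def countSeriesP {σty α : Type*} (P : α → (σty →₀ ℕ) → Prop) : MvPowerSeries σty ℤ :=
  fun d => (Nat.card {a : α // P a d} : ℤ)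

/-- `∑_{S ∈ (ℕ^r)^n, P S} q^S`. -/
def countSeries {n r : ℕ} (P : (Fin n → Seq r) → Prop) : MvPowerSeries (Fin r) ℤ :=
  countSeriesP (fun S d => P S ∧ expOf S = d)

/-- the Pochhammer factor `(q_i; q_i)_n = ∏_{j=1}^n (1 − q_i^j)`. -/
def pochOne {r : ℕ} (n : ℕ) (i : Fin r) : MvPowerSeries (Fin r) ℤ :=
  ∏ j ∈ Finset.Icc 1 n, (1 - (MvPowerSeries.X i : MvPowerSeries (Fin r) ℤ) ^ j)

/-- `∏_{i=1}^{r} (q_i; q_i)_n`. -/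
def pochAll (n r : ℕ) : MvPowerSeries (Fin r) ℤ :=
  ∏ i : Fin r, pochOne n i

/-- the exponent of `q_1^{comaj¹_R(σ⃗)} ⋯ q_k^{comaj^k_R(σ⃗)}`. -/
def comajExp {n : ℕ} (R : Finset ℕ) (k : ℕ) (σv : Fin (k-1) → Equiv.Perm (Fin n)) :
    Fin k →₀ ℕ :=
  Finsupp.equivFunOnFinite.symm (fun i => comajI R k σv (i.val + 1))

/-- A standard Young tableau of shape `μ` (with `μ.card` cells), recorded by the
position `pos i` of each (1-indexed) entry `i ∈ {1, …, μ.card}`; entries increase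
left-to-right along rows and down columns (matrix convention), and `pos` is a
bijection from `{1, …, μ.card}` onto the cells of `μ` (normalized by `0` outside). -/
structure SYT (μ : YoungDiagram) where
  pos : ℕ → ℕ × ℕ
  mem : ∀ i ∈ Finset.Icc 1 μ.card, pos i ∈ μ
  inj : ∀ i ∈ Finset.Icc 1 μ.card, ∀ j ∈ Finset.Icc 1 μ.card, pos i = pos j → i = j
  surj : ∀ c ∈ μ, ∃ i ∈ Finset.Icc 1 μ.card, pos i = c
  row_inc : ∀ i ∈ Finset.Icc 1 μ.card, ∀ j ∈ Finset.Icc 1 μ.card,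
    (pos i).1 = (pos j).1 → (pos i).2 < (pos j).2 → i < j
  col_inc : ∀ i ∈ Finset.Icc 1 μ.card, ∀ j ∈ Finset.Icc 1 μ.card,
    (pos i).2 = (pos j).2 → (pos i).1 < (pos j).1 → i < j
  junk : ∀ i, i ∉ Finset.Icc 1 μ.card → pos i = 0

/-- `des(T)` : the set of `i ∈ {1, …, n−1}` such that `i+1` lies in a strictly
higher row of `T` than `i` (in matrix convention: a strictly larger row index). -/
def desSYT {μ : YoungDiagram} (T : SYT μ) : Finset ℕ :=
  (Finset.Icc 1 (μ.card - 1)).filter (fun i => (T.pos i).1 < (T.pos (i+1)).1)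

/-- the ordinary descent set `des(π) = {i : π_i > π_{i+1}}` (1-indexed). -/
def desPerm {n : ℕ} (π : Equiv.Perm (Fin n)) : Finset ℕ :=
  (Finset.Icc 1 (n-1)).filter (fun i => pget π (i+1) < pget π i)

/-- `comaj(π) = ∑_{i ∈ des(π)} (n − i)`. -/
def comajP {n : ℕ} (π : Equiv.Perm (Fin n)) : ℕ :=
  ∑ i ∈ desPerm π, (n - i)

/-! With `R = ∅` two indices are neighbours only when they are equal, so both the reading order
and the descent condition compare the pairs `(s^u, u)` lexicographically. Hence `τ⁻¹` is the rank
function of this strict total order, and `i` is a descent of `σ` exactly when `τ⁻¹ σ_{i+1} < τ⁻¹ σ_i`. -/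

lemma rnbr_empty_iff {a b : ℕ} : RNbr ∅ a b ↔ a = b := by
  simp only [RNbr, Finset.notMem_empty, imp_false, Finset.mem_Ico, not_and, not_lt]
  constructor
  · intro h
    by_contra hab
    exact absurd (h _ le_rfl) (by omega)
  · rintro rfl t h
    omega

lemma pget_add_one {n : ℕ} (σ : Equiv.Perm (Fin n)) {p : ℕ} (hp : p < n) :
    pget σ (p + 1) = σ ⟨p, hp⟩ + 1 := by
  simp [pget, hp]

lemma sget_val_add_one {n r : ℕ} (S : Fin n → Seq r) (u : Fin n) :
    sget S (u + 1) = S u := by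
  simp [sget]

lemma lexLt_iff_toLex_lt {r : ℕ} {a b : Seq r} : lexLt a b ↔ toLex a < toLex b := Iff.rfl

lemma lexLe_iff_toLex_le {r : ℕ} {a b : Seq r} : lexLe a b ↔ toLex a ≤ toLex b := by
  rw [le_iff_lt_or_eq, toLex_inj]
  rfl

def readKey {n r : ℕ} (S : Fin n → Seq r) (u : Fin n) : Lex (Seq r) ×ₗ Fin n :=
  toLex (toLex (S u), u)

lemma readKey_lt_readKey_iff {n r : ℕ} {S : Fin n → Seq r} {u v : Fin n} :
    readKey S u < readKey S v ↔ toLex (S u) < toLex (S v) ∨ S u = S v ∧ u < v := by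
  rw [readKey, readKey, Prod.Lex.toLex_lt_toLex, toLex_inj]

lemma readBefore_empty_iff {n r : ℕ} (S : Fin n → Seq r) (u v : Fin n) :
    readBefore ∅ S (u + 1) (v + 1) ↔ readKey S u < readKey S v := by
  simp only [readBefore, sget_val_add_one, rnbr_empty_iff, readKey_lt_readKey_iff,
    lexLt_iff_toLex_lt, Fin.lt_def]
  exact or_congr_right (and_congr_right fun _ => by omega)

lemma IsReading.strictMono_readKey {n r : ℕ} {S : Fin n → Seq r}
    {τ : Equiv.Perm (Fin n)} (hτ : IsReading ∅ S τ) : StrictMono (readKey S ∘ τ) := by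
  rcases n with _ | m
  · exact fun u => u.elim0
  refine Fin.strictMono_iff_lt_succ.2 fun i => ?_
  have := hτ (i + 1) (Finset.mem_Icc.2 ⟨by omega, by omega⟩)
  rwa [pget_add_one τ (by omega), pget_add_one τ (by omega), readBefore_empty_iff] at this

lemma IsReading.symm_lt_symm_iff {n r : ℕ} {S : Fin n → Seq r}
    {τ : Equiv.Perm (Fin n)} (hτ : IsReading ∅ S τ) (u v : Fin n) :
    τ.symm u < τ.symm v ↔ readKey S u < readKey S v := by
  simpa using ((hτ.strictMono_readKey).lt_iff_lt (a := τ.symm u) (b := τ.symm v)).symm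

lemma desCond_empty_iff {n r : ℕ} (S : Fin n → Seq r) (σ : Equiv.Perm (Fin n)) {p : ℕ}
    (hp : p + 1 < n) :
    desCond ∅ S σ (p + 1) ↔ readKey S (σ ⟨p + 1, hp⟩) < readKey S (σ ⟨p, by omega⟩) := by
  rw [desCond, pget_add_one σ hp, pget_add_one σ (by omega), sget_val_add_one, sget_val_add_one,
    rnbr_empty_iff, rnbr_empty_iff, readKey_lt_readKey_iff]
  split_ifs with h
  · rw [lexLe_iff_toLex_le, le_iff_lt_or_eq, toLex_inj]
    grind
  · rw [lexLt_iff_toLex_lt]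
    grind

theorem des_empty_set_general (n r : ℕ) (S : Fin n → Seq r)
    (σ τ : Equiv.Perm (Fin n)) (hτ : IsReading ∅ S τ) :
    DesSet ∅ S σ = desPerm (τ⁻¹ * σ) := by
  ext i
  simp only [DesSet, desPerm, Finset.mem_filter, Finset.mem_Icc]
  refine and_congr_right fun hi => ?_
  obtain ⟨p, rfl⟩ : ∃ p, i = p + 1 := ⟨i - 1, by omega⟩
  have hp : p + 1 < n := by omega
  rw [desCond_empty_iff S σ hp, pget_add_one _ hp, pget_add_one _ (by omega),
    Nat.add_lt_add_iff_right, ← Fin.lt_def]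
  exact (hτ.symm_lt_symm_iff _ _).symm

/-- **Lemma.**  For `R = ∅` : `Des_{∅,S}(σ) = des(τ⁻¹σ)` where `τ = σ_∅(S)`. -/
theorem des_empty_set (n r : ℕ) (hn : 1 ≤ n) (S : Fin n → Seq r)
    (σ τ : Equiv.Perm (Fin n)) (hτ : IsReading ∅ S τ) :
    DesSet ∅ S σ = desPerm (τ⁻¹ * σ) :=
  des_empty_set_general n r S σ τ hτ

end

end RomeroComaj
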